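/- arXiv:2008.01710 — 8 statements merged into one kernel-verified Lean document; each statement's English description precedes it below -/
import Mathlib

section
/- Let E be a real inner product space (e.g. EuclideanSpace ℝ (Fin d)), let w ∈ E with w ≠ 0, let α > 0, and let z ∈ E. Suppose x ∈ E maximizes the utility u(y) = (1 if ⟪y, w⟫ ≥ α·‖w‖ else 0) − ‖y − z‖/α over all y ∈ E. Then either x = z, or ⟪z, w⟫ < α·‖w‖ and x = z + ((α − ⟪z, w⟫/‖w‖)/‖w‖) • w; in the latter case ⟪x, w⟫ = α·‖w‖, x − z is a nonnegative multiple of w, and ‖x − z‖ = α − ⟪z, w⟫/‖w‖ ≤ α. -/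
/-!
Not manipulating earns the label of `z` at no cost, so a best response is either `z` itself or
buys an acceptance that `z` lacks. The cheapest accepted report is the projection of `z` onto the
hyperplane `⟪y, w⟫ = α * ‖w‖`, at distance `α - ⟪z, w⟫ / ‖w‖`; by the equality case of
Cauchy–Schwarz it is the only accepted point that close to `z`, and buying acceptance at that
price beats staying put only if the price is at most `α`.
-/

open RealInnerProductSpace

noncomputable def manipulationUtility {E : Type*} [NormedAddCommGroup E] [InnerProductSpace ℝ E]
    (w : E) (τ α : ℝ) (z y : E) : ℝ :=
  (if ⟪y, w⟫ ≥ τ * ‖w‖ then (1 : ℝ) else 0) - ‖y - z‖ / α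

def IsBestResponse {E : Type*} [NormedAddCommGroup E] [InnerProductSpace ℝ E]
    (w : E) (τ α : ℝ) (z x : E) : Prop :=
  ∀ y, manipulationUtility w τ α z y ≤ manipulationUtility w τ α z x

section

variable {E : Type*} [NormedAddCommGroup E] [InnerProductSpace ℝ E]

theorem inner_div_norm_smul_self (w : E) (r : ℝ) : ⟪(r / ‖w‖) • w, w⟫ = r * ‖w‖ := by
  rcases eq_or_ne w 0 with rfl | hw
  · simp
  · have : ‖w‖ ≠ 0 := norm_ne_zero_iff.mpr hw
    rw [real_inner_smul_left, real_inner_self_eq_norm_sq]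
    field_simp

theorem norm_div_norm_smul_self {w : E} (hw : w ≠ 0) {r : ℝ} (hr : 0 ≤ r) :
    ‖(r / ‖w‖) • w‖ = r := by
  rw [norm_smul, Real.norm_of_nonneg (by positivity), div_mul_cancel₀ _ (norm_ne_zero_iff.mpr hw)]

theorem eq_div_norm_smul_of_norm_le_of_mul_norm_le_inner {v w : E} (hw : w ≠ 0) {r : ℝ}
    (hv : ‖v‖ ≤ r) (hvw : r * ‖w‖ ≤ ⟪v, w⟫) : v = (r / ‖w‖) • w := by
  have hw' : 0 < ‖w‖ := norm_pos_iff.mpr hw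
  have hcs : ⟪v, w⟫ ≤ ‖v‖ * ‖w‖ := real_inner_le_norm v w
  have hnorm : ‖v‖ = r := le_antisymm hv (le_of_mul_le_mul_right (hvw.trans hcs) hw')
  subst hnorm
  have heq : ⟪w, v⟫ = ‖w‖ * ‖v‖ := by rw [real_inner_comm, mul_comm]; linarith
  exact ((inner_eq_norm_mul_iff_div hw).mp heq).symm

variable {w : E} {τ α : ℝ} {z x : E}

theorem manipulationUtility_self (w : E) (τ α : ℝ) (z : E) :
    manipulationUtility w τ α z z = if ⟪z, w⟫ ≥ τ * ‖w‖ then 1 else 0 := by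
  simp [manipulationUtility]

theorem IsBestResponse.eq_of_accepted_imp (h : IsBestResponse w τ α z x) (hα : 0 < α)
    (hacc : ⟪x, w⟫ ≥ τ * ‖w‖ → ⟪z, w⟫ ≥ τ * ‖w‖) : x = z := by
  have hz := h z
  rw [manipulationUtility_self, manipulationUtility] at hz
  have hcost : ‖x - z‖ / α ≤ 0 := by
    split_ifs at hz <;> first | linarith | exact absurd (hacc ‹_›) ‹_›
  have : ‖x - z‖ ≤ 0 := by simpa using (div_le_iff₀ hα).mp hcost
  exact sub_eq_zero.mp (norm_le_zero_iff.mp this)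

theorem IsBestResponse.eq_add_div_norm_smul (h : IsBestResponse w τ α z x) (hw : w ≠ 0)
    (hα : 0 < α) (hz : ⟪z, w⟫ < τ * ‖w‖) (hx : ⟪x, w⟫ ≥ τ * ‖w‖) :
    x = z + ((τ - ⟪z, w⟫ / ‖w‖) / ‖w‖) • w ∧ τ - ⟪z, w⟫ / ‖w‖ ≤ α := by
  have hw' : 0 < ‖w‖ := norm_pos_iff.mpr hw
  set β := τ - ⟪z, w⟫ / ‖w‖ with hβ_def
  have hβw : β * ‖w‖ = τ * ‖w‖ - ⟪z, w⟫ := by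
    rw [hβ_def, sub_mul, div_mul_cancel₀ _ hw'.ne']
  have hβ : 0 < β := (mul_pos_iff_of_pos_right hw').mp (by linarith)
  -- `p` is the projection of `z` onto the decision boundary.
  set p := z + (β / ‖w‖) • w
  have hpz : ‖p - z‖ = β := by rw [add_sub_cancel_left, norm_div_norm_smul_self hw hβ.le]
  have hp : ⟪p, w⟫ ≥ τ * ‖w‖ := by
    rw [inner_add_left, inner_div_norm_smul_self]; linarith
  have hup := h p
  have hu0 := h z
  simp only [manipulationUtility, if_pos hp, if_pos hx, if_neg (not_le.mpr hz), hpz, sub_self,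
    norm_zero, zero_div] at hup hu0
  have hle : ‖x - z‖ ≤ β := (div_le_div_iff_of_pos_right hα).mp (by linarith)
  have hxz : x - z = (β / ‖w‖) • w :=
    eq_div_norm_smul_of_norm_le_of_mul_norm_le_inner hw hle (by rw [inner_sub_left]; linarith)
  refine ⟨eq_add_of_sub_eq' hxz, ?_⟩
  rw [hxz, norm_div_norm_smul_self hw hβ.le] at hu0
  exact (div_le_one hα).mp (by linarith)

end

theorem strategic_best_response_characterization
    {E : Type*} [NormedAddCommGroup E] [InnerProductSpace ℝ E]
    (w : E) (hw : w ≠ 0) (α : ℝ) (hα : 0 < α) (z x : E)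
    (hmax : ∀ y : E,
      ((if ⟪y, w⟫ ≥ α * ‖w‖ then (1 : ℝ) else 0) - ‖y - z‖ / α) ≤
        ((if ⟪x, w⟫ ≥ α * ‖w‖ then (1 : ℝ) else 0) - ‖x - z‖ / α)) :
    x = z ∨
      (⟪z, w⟫ < α * ‖w‖ ∧
        x = z + ((α - ⟪z, w⟫ / ‖w‖) / ‖w‖) • w ∧
        ⟪x, w⟫ = α * ‖w‖ ∧
        (∃ c : ℝ, 0 ≤ c ∧ x - z = c • w) ∧
        ‖x - z‖ = α - ⟪z, w⟫ / ‖w‖ ∧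
        α - ⟪z, w⟫ / ‖w‖ ≤ α) := by
  have h : IsBestResponse w α α z x := hmax
  by_cases hgain : ⟪x, w⟫ ≥ α * ‖w‖ ∧ ⟪z, w⟫ < α * ‖w‖
  · obtain ⟨hx, hz⟩ := hgain
    obtain ⟨hxeq, hβα⟩ := h.eq_add_div_norm_smul hw hα hz hx
    have hβ : 0 ≤ α - ⟪z, w⟫ / ‖w‖ := sub_nonneg.mpr ((div_le_iff₀ (norm_pos_iff.mpr hw)).mpr hz.le)
    refine Or.inr ⟨hz, hxeq, ?_, ⟨(α - ⟪z, w⟫ / ‖w‖) / ‖w‖, by positivity,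
      by rw [hxeq, add_sub_cancel_left]⟩, ?_, hβα⟩
    · rw [hxeq, inner_add_left, inner_div_norm_smul_self, sub_mul,
        div_mul_cancel₀ _ (norm_ne_zero_iff.mpr hw)]
      ring
    · rw [hxeq, add_sub_cancel_left, norm_div_norm_smul_self hw hβ]
  · exact Or.inl (h.eq_of_accepted_imp hα fun hx => not_lt.mp fun hz => hgain ⟨hx, hz⟩)
end

section
/- Let E be a real inner product space, w ∈ E with w ≠ 0, α > 0, α' ≥ 0, z ∈ E. If x ∈ E maximizes the utility u(y) = (1 if ⟪y, w⟫ ≥ α'·‖w‖ else 0) − ‖y − z‖/α over all y ∈ E, then it is not the case that (α' − α)·‖w‖ < ⟪x, w⟫ < α'·‖w‖. -/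
/-!
An agent labelled negative whose report lies in the strip can move onto the decision boundary
along `w`, at a cost of less than `α`, and gain the positive label worth `1`; by the triangle
inequality this strictly raises its utility, so such a report is not a best response.
-/

open RealInnerProductSpace

section Projection

variable {E : Type*} [NormedAddCommGroup E] [InnerProductSpace ℝ E]

theorem exists_inner_eq_and_norm_sub_eq (x w : E) (hw : w ≠ 0) (b : ℝ) :
    ∃ y : E, ⟪y, w⟫ = b ∧ ‖y - x‖ = |b - ⟪x, w⟫| / ‖w‖ := by
  have hw' : ‖w‖ ≠ 0 := norm_ne_zero_iff.mpr hw
  refine ⟨x + ((b - ⟪x, w⟫) / ‖w‖ ^ 2) • w, ?_, ?_⟩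
  · rw [inner_add_left, real_inner_smul_left, real_inner_self_eq_norm_sq]
    field_simp
    ring
  · rw [add_sub_cancel_left, norm_smul, Real.norm_eq_abs, abs_div, abs_of_nonneg (sq_nonneg ‖w‖)]
    field_simp

end Projection

section BestResponse

variable {E : Type*} [SeminormedAddCommGroup E]

noncomputable def strategicUtility (P : E → Prop) [DecidablePred P] (α : ℝ) (z y : E) : ℝ :=
  (if P y then 1 else 0) - ‖y - z‖ / α

theorem le_norm_sub_of_forall_strategicUtility_le {P : E → Prop} [DecidablePred P] {α : ℝ}
    {z x y : E} (hα : 0 < α) (hmax : ∀ y, strategicUtility P α z y ≤ strategicUtility P α z x)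
    (hx : ¬ P x) (hy : P y) : α ≤ ‖y - x‖ := by
  have hle := hmax y
  simp only [strategicUtility, if_pos hy, if_neg hx] at hle
  have hgain : 1 ≤ (‖y - z‖ - ‖x - z‖) / α := by rw [sub_div]; linarith
  rw [one_le_div hα] at hgain
  linarith [norm_sub_le_norm_sub_add_norm_sub y x z]

end BestResponse

theorem strategic_best_response_shifted_forbidden_region_general
    {E : Type*} [NormedAddCommGroup E] [InnerProductSpace ℝ E]
    (w : E) (α α' : ℝ) (z x : E)
    (hmax : ∀ y : E,
      ((if ⟪y, w⟫ ≥ α' * ‖w‖ then (1 : ℝ) else 0) - ‖y - z‖ / α) ≤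
        ((if ⟪x, w⟫ ≥ α' * ‖w‖ then (1 : ℝ) else 0) - ‖x - z‖ / α)) :
    ¬ ((α' - α) * ‖w‖ < ⟪x, w⟫ ∧ ⟪x, w⟫ < α' * ‖w‖) := by
  rintro ⟨hlo, hhi⟩
  have hαw : 0 < α * ‖w‖ := by linarith
  have hα : 0 < α := pos_of_mul_pos_left hαw (norm_nonneg w)
  have hw : 0 < ‖w‖ := pos_of_mul_pos_right hαw hα.le
  obtain ⟨y, hy, hyx⟩ := exists_inner_eq_and_norm_sub_eq x w (norm_pos_iff.mp hw) (α' * ‖w‖)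
  have hcost : α ≤ ‖y - x‖ :=
    le_norm_sub_of_forall_strategicUtility_le (P := fun y => ⟪y, w⟫ ≥ α' * ‖w‖) hα hmax
      hhi.not_ge hy.ge
  rw [hyx, abs_of_pos (sub_pos.mpr hhi), le_div_iff₀ hw] at hcost
  linarith

theorem strategic_best_response_shifted_forbidden_region
    {E : Type*} [NormedAddCommGroup E] [InnerProductSpace ℝ E]
    (w : E) (hw : w ≠ 0) (α α' : ℝ) (hα : 0 < α) (hα' : 0 ≤ α') (z x : E)
    (hmax : ∀ y : E,
      ((if ⟪y, w⟫ ≥ α' * ‖w‖ then (1 : ℝ) else 0) - ‖y - z‖ / α) ≤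
        ((if ⟪x, w⟫ ≥ α' * ‖w‖ then (1 : ℝ) else 0) - ‖x - z‖ / α)) :
    ¬ ((α' - α) * ‖w‖ < ⟪x, w⟫ ∧ ⟪x, w⟫ < α' * ‖w‖) :=
  strategic_best_response_shifted_forbidden_region_general w α α' z x hmax
end

section
/- Let E be a real inner product space, w ∈ E with w ≠ 0, α ≥ 0, and x ∈ E. Define the surrogate x̃ = x − (α/‖w‖) • w if ⟪x, w⟫ = α·‖w‖, and x̃ = x otherwise. Then: (a) if ⟪x, w⟫ ≤ 0 then ⟪x̃, w⟫ ≤ 0; and (b) if ⟪x, w⟫ ≥ α·‖w‖ then ⟪x̃, w⟫ ≥ 0. -/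
open RealInnerProductSpace

theorem surrogate_sign_with_hypothesis
    {E : Type*} [NormedAddCommGroup E] [InnerProductSpace ℝ E]
    (w : E) (hw : w ≠ 0) (α : ℝ) (hα : 0 ≤ α) (x : E)
    (xtilde : E)
    (hxt : xtilde = if ⟪x, w⟫ = α * ‖w‖ then x - (α / ‖w‖) • w else x) :
    (⟪x, w⟫ ≤ 0 → ⟪xtilde, w⟫ ≤ 0) ∧
    (⟪x, w⟫ ≥ α * ‖w‖ → ⟪xtilde, w⟫ ≥ 0) := by
  have hnw : (0:ℝ) < ‖w‖ := norm_pos_iff.mpr hw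
  by_cases h : ⟪x, w⟫ = α * ‖w‖
  · have hzero : ⟪xtilde, w⟫ = 0 := by
      rw [hxt, if_pos h, inner_sub_left, real_inner_smul_left, h,
        real_inner_self_eq_norm_sq]
      field_simp
      ring
    constructor
    · intro _; simp [hzero]
    · intro _; simp [hzero]
  · rw [hxt, if_neg h]
    constructor
    · exact fun h1 => h1
    · intro h1
      have : 0 ≤ α * ‖w‖ := mul_nonneg hα hnw.le
      linarith
end

section
/- Let E be a real inner product space, w* ∈ E, c > 0, B ≥ 0, M ∈ ℕ, and w : ℕ → E with w 0 = 0. Suppose for all t < M: ⟪w (t+1) − w t, w*⟫ ≥ c and ‖w (t+1)‖² ≤ ‖w t‖² + B. Then (M : ℝ) ≤ B · ‖w*‖² / c². -/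
open RealInnerProductSpace

theorem perceptron_potential_argument
    {E : Type*} [NormedAddCommGroup E] [InnerProductSpace ℝ E]
    (wstar : E) (c B : ℝ) (hc : 0 < c) (hB : 0 ≤ B)
    (M : ℕ) (w : ℕ → E) (hw0 : w 0 = 0)
    (hprog : ∀ t < M, ⟪w (t + 1) - w t, wstar⟫ ≥ c)
    (hnorm : ∀ t < M, ‖w (t + 1)‖ ^ 2 ≤ ‖w t‖ ^ 2 + B) :
    (M : ℝ) ≤ B * ‖wstar‖ ^ 2 / c ^ 2 := by
  have key : ∀ n ≤ M, (n : ℝ) * c ≤ ⟪w n, wstar⟫ ∧ ‖w n‖ ^ 2 ≤ n * B := by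
    intro n hn
    induction n with
    | zero => simp [hw0]
    | succ k ih =>
      obtain ⟨h1, h2⟩ := ih (le_of_lt (Nat.lt_of_succ_le hn))
      have hk := Nat.lt_of_succ_le hn
      constructor
      · have := hprog k hk
        have : ⟪w (k + 1), wstar⟫ - ⟪w k, wstar⟫ ≥ c := by
          rwa [inner_sub_left] at this
        push_cast
        linarith
      · have := hnorm k hk
        push_cast
        linarith
  obtain ⟨h1, h2⟩ := key M le_rfl
  rcases Nat.eq_zero_or_pos M with hM | hM
  · subst hM; simp; positivity
  have hMpos : (0:ℝ) < M := by exact_mod_cast hM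
  have hcs : ⟪w M, wstar⟫ ≤ ‖w M‖ * ‖wstar‖ := real_inner_le_norm _ _
  have hsq : ((M:ℝ) * c) ^ 2 ≤ (‖w M‖ * ‖wstar‖) ^ 2 := by
    have h0 : (0:ℝ) ≤ (M:ℝ) * c := by positivity
    exact pow_le_pow_left₀ h0 (le_trans h1 hcs) 2
  have hsq2 : (‖w M‖ * ‖wstar‖) ^ 2 ≤ (M * B) * ‖wstar‖ ^ 2 := by
    rw [mul_pow]
    exact mul_le_mul_of_nonneg_right h2 (by positivity)
  have : (M:ℝ) ^ 2 * c ^ 2 ≤ (M * B) * ‖wstar‖ ^ 2 := by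
    calc (M:ℝ) ^ 2 * c ^ 2 = ((M:ℝ) * c) ^ 2 := by ring
    _ ≤ _ := le_trans hsq hsq2
  rw [le_div_iff₀ (by positivity)]
  nlinarith
end

section
/- Let E be a real inner product space, w* ∈ E, R ≥ 0, α ≥ 0, M ∈ ℕ, and sequences x̃ : ℕ → E and s : ℕ → ℝ with s t ∈ {1, −1} for all t. Define w : ℕ → E by w 0 = 0 and w (t+1) = w t + s t • (x̃ t). Suppose for all t < M: s t · ⟪x̃ t, w*⟫ ≥ 1, s t · ⟪x̃ t, w t⟫ ≤ 0, and ‖x̃ t‖ ≤ R + α. Then (M : ℝ) ≤ (R + α)² · ‖w*‖². -/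
open RealInnerProductSpace

theorem strategic_perceptron_core_mistake_bound
    {E : Type*} [NormedAddCommGroup E] [InnerProductSpace ℝ E]
    (wstar : E) (R α : ℝ) (hR : 0 ≤ R) (hα : 0 ≤ α) (M : ℕ)
    (xtilde : ℕ → E) (s : ℕ → ℝ) (hs : ∀ t, s t = 1 ∨ s t = -1)
    (w : ℕ → E) (hw0 : w 0 = 0)
    (hupd : ∀ t, w (t + 1) = w t + s t • xtilde t)
    (hmargin : ∀ t < M, s t * ⟪xtilde t, wstar⟫ ≥ 1)
    (hsign : ∀ t < M, s t * ⟪xtilde t, w t⟫ ≤ 0)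
    (hnorm : ∀ t < M, ‖xtilde t‖ ≤ R + α) :
    (M : ℝ) ≤ (R + α) ^ 2 * ‖wstar‖ ^ 2 := by
  have lower : ∀ t ≤ M, (t : ℝ) ≤ ⟪w t, wstar⟫ := by
    intro t
    induction t with
    | zero => intro _; simp [hw0]
    | succ n ih =>
      intro hle
      have hn : n < M := hle
      have := ih (le_of_lt hn)
      have hmar := hmargin n hn
      have : ((n : ℝ) + 1) ≤ ⟪w n, wstar⟫ + s n * ⟪xtilde n, wstar⟫ := by linarith
      calc ((n + 1 : ℕ) : ℝ) = (n : ℝ) + 1 := by push_cast; ring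
        _ ≤ ⟪w n, wstar⟫ + s n * ⟪xtilde n, wstar⟫ := this
        _ = ⟪w (n + 1), wstar⟫ := by
            rw [hupd n, inner_add_left, real_inner_smul_left]
  have upper : ∀ t ≤ M, ‖w t‖ ^ 2 ≤ (t : ℝ) * (R + α) ^ 2 := by
    intro t
    induction t with
    | zero => intro _; simp [hw0]
    | succ n ih =>
      intro hle
      have hn : n < M := hle
      have ihn := ih (le_of_lt hn)
      have hsq : (s n) ^ 2 = 1 := by rcases hs n with h | h <;> simp [h]
      have hcross : ⟪w n, s n • xtilde n⟫ ≤ 0 := by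
        rw [real_inner_smul_right, real_inner_comm]
        exact hsign n hn
      have hxn : ‖s n • xtilde n‖ ^ 2 ≤ (R + α) ^ 2 := by
        rw [norm_smul, mul_pow]
        have : |s n| ^ 2 = 1 := by rw [sq_abs]; exact hsq
        rw [Real.norm_eq_abs, this, one_mul]
        exact pow_le_pow_left₀ (norm_nonneg _) (hnorm n hn) 2
      have hexp : ‖w (n + 1)‖ ^ 2 = ‖w n‖ ^ 2 + 2 * ⟪w n, s n • xtilde n⟫ + ‖s n • xtilde n‖ ^ 2 := by
        rw [hupd n]; exact norm_add_sq_real _ _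
      calc ‖w (n + 1)‖ ^ 2 ≤ ‖w n‖ ^ 2 + ‖s n • xtilde n‖ ^ 2 := by rw [hexp]; linarith
        _ ≤ (n : ℝ) * (R + α) ^ 2 + (R + α) ^ 2 := by linarith
        _ = ((n + 1 : ℕ) : ℝ) * (R + α) ^ 2 := by push_cast; ring
  rcases Nat.eq_zero_or_pos M with hM | hM
  · simp [hM]; positivity
  have h1 : (M : ℝ) ≤ ⟪w M, wstar⟫ := lower M le_rfl
  have h2 : ‖w M‖ ^ 2 ≤ (M : ℝ) * (R + α) ^ 2 := upper M le_rfl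
  have hcs : ⟪w M, wstar⟫ ≤ ‖w M‖ * ‖wstar‖ := real_inner_le_norm _ _
  have hMpos : (0 : ℝ) < M := by exact_mod_cast hM
  have hsq : (M : ℝ) ^ 2 ≤ ‖w M‖ ^ 2 * ‖wstar‖ ^ 2 := by
    have : (M : ℝ) ≤ ‖w M‖ * ‖wstar‖ := le_trans h1 hcs
    calc (M : ℝ) ^ 2 ≤ (‖w M‖ * ‖wstar‖) ^ 2 := by
          exact pow_le_pow_left₀ (le_of_lt hMpos) this 2
      _ = ‖w M‖ ^ 2 * ‖wstar‖ ^ 2 := by ring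
  have h3 : (M : ℝ) ^ 2 ≤ (M : ℝ) * (R + α) ^ 2 * ‖wstar‖ ^ 2 := by
    calc (M : ℝ) ^ 2 ≤ ‖w M‖ ^ 2 * ‖wstar‖ ^ 2 := hsq
      _ ≤ (M : ℝ) * (R + α) ^ 2 * ‖wstar‖ ^ 2 := by
          exact mul_le_mul_of_nonneg_right h2 (sq_nonneg _)
  nlinarith [hMpos]
end

section
/- Let d ∈ ℕ, E = EuclideanSpace ℝ (Fin d) with standard basis vectors e j, let w, v ∈ E, i : Fin d, and C ≥ 0. Suppose ‖v‖ ≤ C, ⟪v, w⟫ ≤ 0, define μ : Fin d → ℝ by μ j = max 0 (−⟪e j, w + v⟫), assume μ j ≤ C for all j, and set η = 1/(4‖w‖ + 8C + 2). Then ‖w + v + η • (e i) + ∑_{j} (μ j) • (e j)‖² ≤ ‖w‖² + (d + 1)·C² + 1. -/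
/-!
Write `u = w + v`. Since `μ j = max 0 (-u j)`, adding the corrections replaces `u` by its
coordinatewise positive part, which does not increase the norm; the tie-breaking step then adds
at most `η` to the norm. As `⟪v, w⟫ ≤ 0` we have `‖u‖² ≤ ‖w‖² + C²`, and the choice of `η` makes
`2η‖u‖ + η² ≤ 1`. This even gives the bound `‖w‖² + C² + 1`.
-/

open RealInnerProductSpace

theorem PiLp.norm_le_norm_of_forall_norm_le {ι : Type*} [Fintype ι] {β : ι → Type*}
    [∀ i, SeminormedAddCommGroup (β i)] {x y : PiLp 2 β} (h : ∀ i, ‖x i‖ ≤ ‖y i‖) :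
    ‖x‖ ≤ ‖y‖ := by
  refine (sq_le_sq₀ (norm_nonneg x) (norm_nonneg y)).1 ?_
  simp only [PiLp.norm_sq_eq_of_L2]
  exact Finset.sum_le_sum fun i _ => pow_le_pow_left₀ (norm_nonneg _) (h i) 2

theorem EuclideanSpace.sum_smul_single_one {ι 𝕜 : Type*} [Fintype ι] [DecidableEq ι] [RCLike 𝕜]
    (f : ι → 𝕜) : ∑ j, f j • EuclideanSpace.single j (1 : 𝕜) = WithLp.toLp 2 f := by
  simpa only [EuclideanSpace.basisFun_apply, EuclideanSpace.basisFun_repr] using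
    (EuclideanSpace.basisFun ι 𝕜).sum_repr (WithLp.toLp 2 f)

theorem EuclideanSpace.norm_add_sum_negPart_smul_single_le {ι : Type*} [Fintype ι]
    [DecidableEq ι] (u : EuclideanSpace ℝ ι) :
    ‖u + ∑ j, max 0 (-u j) • EuclideanSpace.single j (1 : ℝ)‖ ≤ ‖u‖ := by
  refine PiLp.norm_le_norm_of_forall_norm_le fun j => ?_
  have hpos : u j + max 0 (-u j) = max (u j) 0 := by
    rw [add_max, add_zero, add_neg_cancel, max_comm]
  rw [EuclideanSpace.sum_smul_single_one, PiLp.add_apply, hpos, Real.norm_eq_abs,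
    Real.norm_eq_abs]
  simpa using abs_max_sub_max_le_abs (u j) 0 0

theorem norm_add_sq_le_of_inner_nonpos {E : Type*} [NormedAddCommGroup E]
    [InnerProductSpace ℝ E] {x y : E} (h : ⟪x, y⟫ ≤ 0) : ‖x + y‖ ^ 2 ≤ ‖x‖ ^ 2 + ‖y‖ ^ 2 := by
  rw [norm_add_sq_real]
  linarith

theorem add_sq_le_sq_add_one_of_mul_le_one {r s η : ℝ} (hη : 0 ≤ η) (hr₀ : 0 ≤ r)
    (hr : r ≤ s) (hηs : η * (4 * s + 2) ≤ 1) : (r + η) ^ 2 ≤ r ^ 2 + 1 := by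
  nlinarith [mul_le_mul_of_nonneg_left hr hη, mul_nonneg hη hr₀]

theorem l1_update_norm_increase_step_general
    (d : ℕ) (w v : EuclideanSpace ℝ (Fin d)) (i : Fin d) (C : ℝ)
    (hv : ‖v‖ ≤ C) (hvw : ⟪v, w⟫ ≤ 0)
    (μ : Fin d → ℝ)
    (hμ : ∀ j, μ j = max 0 (-⟪EuclideanSpace.single j (1 : ℝ), w + v⟫))
    (η : ℝ) (hη : η = 1 / (4 * ‖w‖ + 8 * C + 2)) :
    ‖w + v + η • EuclideanSpace.single i (1 : ℝ) +
        ∑ j, μ j • EuclideanSpace.single j (1 : ℝ)‖ ^ 2 ≤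
      ‖w‖ ^ 2 + (d + 1) * C ^ 2 + 1 := by
  have hC : 0 ≤ C := (norm_nonneg v).trans hv
  have hη0 : 0 ≤ η := by rw [hη]; positivity
  have hηs : η * (4 * (‖w‖ + C) + 2) ≤ 1 := by
    rw [hη, one_div_mul_eq_div, div_le_one (by positivity)]
    linarith
  have hμu : μ = fun j => max 0 (-(w + v) j) := by
    ext j
    simp [hμ, EuclideanSpace.inner_single_left]
  have hupdate : ‖w + v + η • EuclideanSpace.single i (1 : ℝ) +
      ∑ j, μ j • EuclideanSpace.single j (1 : ℝ)‖ ≤ ‖w + v‖ + η := by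
    rw [add_right_comm, hμu]
    refine (norm_add_le _ _).trans (add_le_add
      (EuclideanSpace.norm_add_sum_negPart_smul_single_le _) ?_)
    simp [norm_smul, abs_of_nonneg hη0]
  have hwv : ‖w + v‖ ^ 2 ≤ ‖w‖ ^ 2 + C ^ 2 :=
    (norm_add_sq_le_of_inner_nonpos (real_inner_comm v w ▸ hvw)).trans (by gcongr)
  have hwvC : ‖w + v‖ ≤ ‖w‖ + C := (norm_add_le w v).trans (by linarith)
  calc _ ≤ (‖w + v‖ + η) ^ 2 := by gcongr
    _ ≤ ‖w + v‖ ^ 2 + 1 := add_sq_le_sq_add_one_of_mul_le_one hη0 (norm_nonneg _) hwvC hηs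
    _ ≤ ‖w‖ ^ 2 + (d + 1) * C ^ 2 + 1 := by
      have : 0 ≤ (d : ℝ) * C ^ 2 := by positivity
      linarith

theorem l1_update_norm_increase_step
    (d : ℕ) (w v : EuclideanSpace ℝ (Fin d)) (i : Fin d) (C : ℝ) (hC : 0 ≤ C)
    (hv : ‖v‖ ≤ C) (hvw : ⟪v, w⟫ ≤ 0)
    (μ : Fin d → ℝ)
    (hμ : ∀ j, μ j = max 0 (-⟪EuclideanSpace.single j (1 : ℝ), w + v⟫))
    (hμC : ∀ j, μ j ≤ C)
    (η : ℝ) (hη : η = 1 / (4 * ‖w‖ + 8 * C + 2)) :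
    ‖w + v + η • EuclideanSpace.single i (1 : ℝ) +
        ∑ j, μ j • EuclideanSpace.single j (1 : ℝ)‖ ^ 2 ≤
      ‖w‖ ^ 2 + (d + 1) * C ^ 2 + 1 :=
  l1_update_norm_increase_step_general d w v i C hv hvw μ hμ η hη
end

section
/- Let d ∈ ℕ, E = EuclideanSpace ℝ (Fin d) with standard basis vectors e j, w* ∈ E, R ≥ 0, α ≥ 0, M ∈ ℕ. Let s : ℕ → ℝ with s t ∈ {1, −1}, x̃ : ℕ → E, i : ℕ → Fin d, and define w : ℕ → E, μ : ℕ → Fin d → ℝ, η : ℕ → ℝ by: w 0 = 0, μ t j = max 0 (−⟪e j, w t + s t • x̃ t⟫), η t = 1/(4‖w t‖ + 8(R + α) + 2), and w (t+1) = w t + s t • (x̃ t) + (η t) • (e (i t)) + ∑_{j} (μ t j) • (e j). Suppose ⟪e j, w*⟫ ≥ 0 for all j, and for all t < M: s t · ⟪x̃ t, w*⟫ ≥ 1, s t · ⟪x̃ t, w t⟫ ≤ 0, ‖x̃ t‖ ≤ R + α, and μ t j ≤ R + α for all j. Then (M : ℝ) ≤ (1 + (d + 1)·(R + α)²) · ‖w*‖².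 -/
open RealInnerProductSpace

set_option maxHeartbeats 1000000

theorem strategic_perceptron_weighted_l1_mistake_bound
    (d : ℕ) (wstar : EuclideanSpace ℝ (Fin d)) (R α : ℝ)
    (hR : 0 ≤ R) (hα : 0 ≤ α) (M : ℕ)
    (s : ℕ → ℝ) (hs : ∀ t, s t = 1 ∨ s t = -1)
    (xtilde : ℕ → EuclideanSpace ℝ (Fin d)) (i : ℕ → Fin d)
    (w : ℕ → EuclideanSpace ℝ (Fin d)) (μ : ℕ → Fin d → ℝ) (η : ℕ → ℝ)
    (hw0 : w 0 = 0)
    (hμ : ∀ t j, μ t j = max 0 (-⟪EuclideanSpace.single j (1 : ℝ), w t + s t • xtilde t⟫))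
    (hη : ∀ t, η t = 1 / (4 * ‖w t‖ + 8 * (R + α) + 2))
    (hupd : ∀ t, w (t + 1) = w t + s t • xtilde t +
        η t • EuclideanSpace.single (i t) (1 : ℝ) +
        ∑ j, μ t j • EuclideanSpace.single j (1 : ℝ))
    (hbasis : ∀ j, ⟪EuclideanSpace.single j (1 : ℝ), wstar⟫ ≥ 0)
    (hmargin : ∀ t < M, s t * ⟪xtilde t, wstar⟫ ≥ 1)
    (hsign : ∀ t < M, s t * ⟪xtilde t, w t⟫ ≤ 0)
    (hnorm : ∀ t < M, ‖xtilde t‖ ≤ R + α)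
    (hμb : ∀ t < M, ∀ j, μ t j ≤ R + α) :
    (M : ℝ) ≤ (1 + (d + 1) * (R + α) ^ 2) * ‖wstar‖ ^ 2 := by
  set A := R + α with hAdef
  have hA0 : 0 ≤ A := add_nonneg hR hα
  set K : ℝ := 1 + ((d : ℝ) + 1) * A ^ 2 with hKdef
  have hK0 : (0:ℝ) ≤ K := by positivity
  have main : ∀ t, t ≤ M → ((t : ℝ) ≤ ⟪w t, wstar⟫ ∧ ‖w t‖ ^ 2 ≤ (t : ℝ) * K) := by
    intro t
    induction t with
    | zero => intro _; constructor <;> simp [hw0]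
    | succ t ih =>
      intro hle
      have htM : t < M := hle
      obtain ⟨ih1, ih2⟩ := ih (Nat.le_of_lt htM)
      set u : EuclideanSpace ℝ (Fin d) := w t + s t • xtilde t with hu
      set S : EuclideanSpace ℝ (Fin d) :=
        ∑ j, μ t j • EuclideanSpace.single j (1 : ℝ) with hS
      set c : EuclideanSpace ℝ (Fin d) :=
        η t • EuclideanSpace.single (i t) (1 : ℝ) + S with hc
      have hwt1 : w (t+1) = u + c := by
        rw [hupd t, hu, hc, hS]; abel
      have hsabs : |s t| = 1 := by rcases hs t with h | h <;> rw [h] <;> norm_num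
      have hD : (0:ℝ) < 4 * ‖w t‖ + 8 * A + 2 := by positivity
      have hη0 : 0 ≤ η t := by rw [hη t]; positivity
      have hηhalf : η t ≤ 1 / 2 := by
        rw [hη t, div_le_div_iff₀ hD (by norm_num)]
        nlinarith [norm_nonneg (w t)]
      have hηA : η t * A ≤ 1 / 8 := by
        rw [hη t, div_mul_eq_mul_div, div_le_div_iff₀ hD (by norm_num)]
        nlinarith [norm_nonneg (w t)]
      have hηu : η t * (‖w t‖ + A) ≤ 1 / 4 := by
        rw [hη t, div_mul_eq_mul_div, div_le_div_iff₀ hD (by norm_num)]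
        nlinarith [norm_nonneg (w t)]
      have hμj : ∀ j, μ t j = max 0 (-⟪EuclideanSpace.single j (1 : ℝ), u⟫) := by
        intro j; rw [hu]; exact hμ t j
      have hμ0 : ∀ j, 0 ≤ μ t j := fun j => by rw [hμj j]; exact le_max_left _ _
      have hμA : ∀ j, μ t j ≤ A := hμb t htM
      have hμu : ∀ j, μ t j * ⟪EuclideanSpace.single j (1 : ℝ), u⟫ ≤ 0 := by
        intro j
        rcases le_total (⟪EuclideanSpace.single j (1 : ℝ), u⟫) 0 with h | h
        · exact mul_nonpos_iff.mpr (Or.inl ⟨hμ0 j, h⟩)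
        · have hz : μ t j = 0 := by rw [hμj j, max_eq_left (neg_nonpos.mpr h)]
          rw [hz, zero_mul]
      -- inner product with wstar
      have h1 : ⟪w (t+1), wstar⟫ = ⟪w t, wstar⟫ + s t * ⟪xtilde t, wstar⟫ +
          η t * ⟪EuclideanSpace.single (i t) (1 : ℝ), wstar⟫ +
          ∑ j, μ t j * ⟪EuclideanSpace.single j (1 : ℝ), wstar⟫ := by
        rw [hupd t]
        simp only [inner_add_left, real_inner_smul_left, sum_inner]
      have hsum0 : 0 ≤ ∑ j, μ t j * ⟪EuclideanSpace.single j (1 : ℝ), wstar⟫ :=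
        Finset.sum_nonneg fun j _ => mul_nonneg (hμ0 j) (hbasis j)
      have hip1 : ((t:ℝ) + 1) ≤ ⟪w (t+1), wstar⟫ := by
        have := hmargin t htM
        have hηb : 0 ≤ η t * ⟪EuclideanSpace.single (i t) (1 : ℝ), wstar⟫ :=
          mul_nonneg hη0 (hbasis (i t))
        rw [h1]; linarith
      -- norm bound
      have huN : ‖u‖ ≤ ‖w t‖ + A := by
        calc ‖u‖ ≤ ‖w t‖ + ‖s t • xtilde t‖ := norm_add_le _ _
          _ ≤ ‖w t‖ + A := by
              rw [norm_smul, Real.norm_eq_abs, hsabs, one_mul]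
              linarith [hnorm t htM]
      have hu2 : ‖u‖^2 ≤ ‖w t‖^2 + A^2 := by
        have hexp := norm_add_sq_real (w t) (s t • xtilde t)
        rw [real_inner_smul_right, real_inner_comm (xtilde t) (w t)] at hexp
        have hsx : ‖s t • xtilde t‖ ≤ A := by
          rw [norm_smul, Real.norm_eq_abs, hsabs, one_mul]; exact hnorm t htM
        nlinarith [hsign t htM, norm_nonneg (s t • xtilde t)]
      have huc : ⟪u, c⟫ = η t * ⟪EuclideanSpace.single (i t) (1 : ℝ), u⟫ +
          ∑ j, μ t j * ⟪EuclideanSpace.single j (1 : ℝ), u⟫ := by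
        rw [hc, hS]
        simp only [inner_add_right, real_inner_smul_right, inner_sum, real_inner_comm u]
      have huc4 : ⟪u, c⟫ ≤ 1/4 := by
        have hcs : ⟪EuclideanSpace.single (i t) (1 : ℝ), u⟫ ≤ ‖u‖ := by
          have := real_inner_le_norm (EuclideanSpace.single (i t) (1 : ℝ)) u
          simpa using this
        have hsml : ∑ j, μ t j * ⟪EuclideanSpace.single j (1 : ℝ), u⟫ ≤ 0 :=
          Finset.sum_nonpos fun j _ => hμu j
        rw [huc]
        nlinarith [hη0, huN, hηu]
      have hSapp : ∀ k, S k = μ t k := by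
        intro k
        have h1 : (⟪EuclideanSpace.single k (1:ℝ), S⟫ : ℝ) = S k := by
          rw [EuclideanSpace.inner_single_left]; simp
        rw [← h1, hS, inner_sum]
        simp [real_inner_smul_right, EuclideanSpace.inner_single_left,
          EuclideanSpace.single_apply]
      have hSsq : ‖S‖^2 = ∑ j, (μ t j)^2 := by
        rw [EuclideanSpace.norm_eq, Real.sq_sqrt (by positivity)]
        exact Finset.sum_congr rfl fun j _ => by rw [hSapp j, Real.norm_eq_abs, sq_abs]
      have hSin : ⟪EuclideanSpace.single (i t) (1 : ℝ), S⟫ = μ t (i t) := by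
        rw [EuclideanSpace.inner_single_left]
        simp [hSapp]
      have hcsq : ‖c‖^2 = η t ^ 2 + 2 * (η t * μ t (i t)) + ∑ j, (μ t j)^2 := by
        rw [hc, norm_add_sq_real, real_inner_smul_left, hSin, hSsq, norm_smul]
        simp [mul_pow, sq_abs]
      have hsumsq : ∑ j, (μ t j)^2 ≤ (d:ℝ) * A^2 := by
        calc ∑ j, (μ t j)^2 ≤ ∑ _j : Fin d, A^2 :=
              Finset.sum_le_sum fun j _ => by nlinarith [hμ0 j, hμA j]
          _ = (d:ℝ) * A^2 := by
              rw [Finset.sum_const, Finset.card_univ, Fintype.card_fin, nsmul_eq_mul]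
      have hηsq : η t ^ 2 ≤ 1/4 := by nlinarith
      have hημi : η t * μ t (i t) ≤ 1/8 := by nlinarith [hμA (i t), hμ0 (i t)]
      have hnc : ‖w (t+1)‖^2 = ‖u‖^2 + 2 * ⟪u, c⟫ + ‖c‖^2 := by
        rw [hwt1]; exact norm_add_sq_real u c
      have hKsplit : ((t:ℝ) + 1) * K = (t:ℝ) * K + 1 + ((d:ℝ) + 1) * A^2 := by
        rw [hKdef]; ring
      constructor
      · push_cast; exact hip1
      · push_cast
        rw [hnc]
        linarith [hu2, huc4, hcsq.le, hcsq.ge, hsumsq, hηsq, hημi, ih2, hKsplit.le, hKsplit.ge]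
  obtain ⟨h1, h2⟩ := main M le_rfl
  have hcs : ⟪w M, wstar⟫ ≤ ‖w M‖ * ‖wstar‖ := real_inner_le_norm _ _
  rcases Nat.eq_zero_or_pos M with h0 | hpos
  · rw [h0]; push_cast; positivity
  · have hM1 : (1:ℝ) ≤ (M:ℝ) := by exact_mod_cast hpos
    have hMle : (M:ℝ) ≤ ‖w M‖ * ‖wstar‖ := le_trans h1 hcs
    have hsq : (M:ℝ) * M ≤ ‖w M‖^2 * ‖wstar‖^2 := by
      nlinarith [norm_nonneg (w M), norm_nonneg wstar, Nat.cast_nonneg (α := ℝ) M]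
    have h3 : ‖w M‖^2 * ‖wstar‖^2 ≤ ((M:ℝ) * K) * ‖wstar‖^2 :=
      mul_le_mul_of_nonneg_right h2 (sq_nonneg _)
    nlinarith [sq_nonneg ‖wstar‖]
end

section
/- Let E be a real inner product space and let w, w*, z ∈ E with w* ≠ 0, ⟪w, w*⟫ ≥ 0 and ⟪z, w*⟫ ≤ −1. If x̃ = z + c • w for some real c with c · ‖w‖ ≤ 1/(2‖w*‖), then ⟪x̃, w*⟫ ≤ −1/2. -/
open RealInnerProductSpace

theorem mul_inner_le_of_mul_norm_le {E : Type*} [NormedAddCommGroup E] [InnerProductSpace ℝ E]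
    {w v : E} {c r : ℝ} (hw : 0 ≤ ⟪w, v⟫) (hc : c * ‖w‖ ≤ r) (hr : 0 ≤ r) :
    c * ⟪w, v⟫ ≤ r * ‖v‖ := by
  rcases le_or_gt c 0 with hc_nonpos | hc_pos
  · exact (mul_nonpos_of_nonpos_of_nonneg hc_nonpos hw).trans (by positivity)
  · calc c * ⟪w, v⟫ ≤ c * (‖w‖ * ‖v‖) := by gcongr; exact real_inner_le_norm w v
      _ = c * ‖w‖ * ‖v‖ := (mul_assoc _ _ _).symm
      _ ≤ r * ‖v‖ := by gcongr

theorem surrogate_negative_half_margin_underestimate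
    {E : Type*} [NormedAddCommGroup E] [InnerProductSpace ℝ E]
    (w wstar z : E) (hws : wstar ≠ 0)
    (hw : ⟪w, wstar⟫ ≥ 0) (hz : ⟪z, wstar⟫ ≤ -1)
    (xtilde : E) (c : ℝ) (hc : c * ‖w‖ ≤ 1 / (2 * ‖wstar‖))
    (hx : xtilde = z + c • w) :
    ⟪xtilde, wstar⟫ ≤ -(1 / 2) := by
  have hwstar : 0 < ‖wstar‖ := norm_pos_iff.mpr hws
  have hshift : c * ⟪w, wstar⟫ ≤ 1 / 2 :=
    calc c * ⟪w, wstar⟫ ≤ 1 / (2 * ‖wstar‖) * ‖wstar‖ :=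
          mul_inner_le_of_mul_norm_le hw hc (by positivity)
      _ = 1 / 2 := by field_simp
  rw [hx, inner_add_left, real_inner_smul_left]
  linarith
end
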